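/- arXiv:2102.07722 — 2 statements merged into one kernel-verified Lean document; each statement's English description precedes it below -/
import Mathlib

section
/- Let β = (β_n) be a Cantor real base and S_β the topological closure (for the prefix distance) of the set D_β = {d_β(x) : x ∈ [0,1)}. A sequence a ∈ ℕ^ℕ belongs to S_β if and only if for all n ∈ ℕ, σ^n(a) ≤_lex d*_{β^{(n)}}(1). -/
/-
A greedy expansion of `y ∈ [0,1)` stays lexicographically below the quasi-greedy expansion of `1`:
as long as the digits agree, the greedy remainders stay strictly below the quasi-greedy ones. Since
every tail of a greedy expansion is again a greedy expansion, in the shifted base, of a point of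
`[0,1)`, and since lexicographic comparison is decided on finite prefixes, `S_β` satisfies the
condition. Conversely, if `a` satisfies it, the value of every prefix of every tail of `a` is `< 1`:
compare with the prefix values `1 - r_m / (β_0 ⋯ β_m)` of the quasi-greedy expansion. Hence the
greedy algorithm applied to the value of the first `N` digits of `a` returns these `N` digits, and
these greedy expansions converge to `a`.
-/

open Filter

/-- Product of the first `n+1` terms of the base sequence. -/
noncomputable def cprod (β : ℕ → ℝ) (n : ℕ) : ℝ := ∏ i ∈ Finset.range (n+1), β i

/-- A Cantor real base: all terms exceed 1 and the partial products tend to infinity. -/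
def IsCantorBase (β : ℕ → ℝ) : Prop :=
  (∀ n, 1 < β n) ∧ Tendsto (cprod β) atTop atTop

/-- Value of a real-digit sequence in a Cantor base. -/
noncomputable def valB (β : ℕ → ℝ) (a : ℕ → ℝ) : ℝ := ∑' n, a n / cprod β n

/-- Value of a natural-digit sequence in a Cantor base. -/
noncomputable def valN (β : ℕ → ℝ) (a : ℕ → ℕ) : ℝ := valB β (fun n => (a n : ℝ))

/-- Remainders of the greedy algorithm. -/
noncomputable def greedyRem (β : ℕ → ℝ) (x : ℝ) : ℕ → ℝ
  | 0 => β 0 * x - ⌊β 0 * x⌋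
  | n+1 => β (n+1) * greedyRem β x n - ⌊β (n+1) * greedyRem β x n⌋

/-- Digits of the greedy expansion. -/
noncomputable def greedy (β : ℕ → ℝ) (x : ℝ) : ℕ → ℕ
  | 0 => (⌊β 0 * x⌋).toNat
  | n+1 => (⌊β (n+1) * greedyRem β x n⌋).toNat

/-- Remainders of the quasi-greedy algorithm started at `1`:
at each step the largest digit keeping the remainder strictly positive is chosen. -/
noncomputable def qRem (β : ℕ → ℝ) : ℕ → ℝ
  | 0 => β 0 - (⌈β 0⌉ - 1)
  | n+1 => β (n+1) * qRem β n - (⌈β (n+1) * qRem β n⌉ - 1)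

/-- Digits of the quasi-greedy expansion of `1`. -/
noncomputable def quasiGreedy (β : ℕ → ℝ) : ℕ → ℕ
  | 0 => (⌈β 0⌉ - 1).toNat
  | n+1 => (⌈β (n+1) * qRem β n⌉ - 1).toNat

/-- The `n`-shifted base `β^{(n)}`. -/
def shiftBase (β : ℕ → ℝ) (n : ℕ) : ℕ → ℝ := fun k => β (n + k)

/-- The `n`-fold shift `σ^n` of a digit sequence. -/
def shiftSeq (a : ℕ → ℕ) (n : ℕ) : ℕ → ℕ := fun k => a (n + k)

/-- Strict lexicographic order on digit sequences. -/
def LexLt (a b : ℕ → ℕ) : Prop := ∃ ℓ, (∀ k, k < ℓ → a k = b k) ∧ a ℓ < b ℓ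

/-- Lexicographic order on digit sequences. -/
def LexLe (a b : ℕ → ℕ) : Prop := LexLt a b ∨ a = b

/-- The set of greedy expansions of points of `[0,1)`. -/
def Dset (β : ℕ → ℝ) : Set (ℕ → ℕ) := {a | ∃ x ∈ Set.Ico (0:ℝ) 1, a = greedy β x}


open Topology

lemma shiftBase_zero (γ : ℕ → ℝ) : shiftBase γ 0 = γ := funext fun k => by simp [shiftBase]

lemma shiftSeq_zero (b : ℕ → ℕ) : shiftSeq b 0 = b := funext fun k => by simp [shiftSeq]

lemma shiftBase_shiftBase (γ : ℕ → ℝ) (i j : ℕ) :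
    shiftBase (shiftBase γ i) j = shiftBase γ (i + j) :=
  funext fun k => by simp [shiftBase, add_assoc]

lemma shiftSeq_shiftSeq (b : ℕ → ℕ) (i j : ℕ) : shiftSeq (shiftSeq b i) j = shiftSeq b (i + j) :=
  funext fun k => by simp [shiftSeq, add_assoc]

lemma cprod_pos {γ : ℕ → ℝ} (hγ : ∀ n, 0 < γ n) (n : ℕ) : 0 < cprod γ n :=
  Finset.prod_pos fun i _ => hγ i

lemma cprod_zero (γ : ℕ → ℝ) : cprod γ 0 = γ 0 := by
  simp [cprod]

lemma cprod_succ (γ : ℕ → ℝ) (n : ℕ) : cprod γ (n + 1) = cprod γ n * γ (n + 1) :=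
  Finset.prod_range_succ _ _

lemma cprod_add (γ : ℕ → ℝ) (s i : ℕ) :
    cprod γ (s + i) = (∏ j ∈ Finset.range s, γ j) * cprod (shiftBase γ s) i := by
  rw [cprod, add_assoc, Finset.prod_range_add]
  rfl

noncomputable def truncVal (γ : ℕ → ℝ) (b : ℕ → ℕ) (m : ℕ) : ℝ :=
  ∑ i ∈ Finset.range m, (b i : ℝ) / cprod γ i

section truncVal

variable {γ : ℕ → ℝ}

lemma truncVal_nonneg (hγ : ∀ n, 0 < γ n) (b : ℕ → ℕ) (m : ℕ) : 0 ≤ truncVal γ b m :=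
  Finset.sum_nonneg fun i _ => div_nonneg (Nat.cast_nonneg _) (cprod_pos hγ i).le

lemma truncVal_congr {b c : ℕ → ℕ} {m : ℕ} (h : ∀ k < m, b k = c k) :
    truncVal γ b m = truncVal γ c m :=
  Finset.sum_congr rfl fun i hi => by rw [h i (Finset.mem_range.1 hi)]

lemma truncVal_succ (b : ℕ → ℕ) (m : ℕ) :
    truncVal γ b (m + 1) = truncVal γ b m + b m / cprod γ m :=
  Finset.sum_range_succ _ _

lemma truncVal_add (b : ℕ → ℕ) (s t : ℕ) :
    truncVal γ b (s + t) =
      truncVal γ b s + truncVal (shiftBase γ s) (shiftSeq b s) t / ∏ j ∈ Finset.range s, γ j := by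
  rw [truncVal, Finset.sum_range_add, truncVal, truncVal, Finset.sum_div]
  congr 1
  refine Finset.sum_congr rfl fun i _ => ?_
  rw [cprod_add, div_mul_eq_div_div_swap]
  rfl

lemma truncVal_succ' (b : ℕ → ℕ) (m : ℕ) :
    truncVal γ b (m + 1) = ((b 0 : ℝ) + truncVal (shiftBase γ 1) (shiftSeq b 1) m) / γ 0 := by
  rw [add_comm m, truncVal_add, truncVal_succ, add_div]
  simp [truncVal, cprod]

end truncVal

lemma qRem_pos (γ : ℕ → ℝ) (n : ℕ) : 0 < qRem γ n := by
  cases n with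
  | zero => simp only [qRem]; linarith [Int.ceil_lt_add_one (γ 0)]
  | succ n => simp only [qRem]; linarith [Int.ceil_lt_add_one (γ (n + 1) * qRem γ n)]

lemma toNat_ceil_sub_one_add {v : ℝ} (hv : 0 < v) :
    ((⌈v⌉ - 1).toNat : ℝ) + (v - (⌈v⌉ - 1)) = v := by
  have : (1 : ℤ) ≤ ⌈v⌉ := Int.one_le_ceil_iff.2 hv
  rw [← Int.cast_natCast, Int.toNat_of_nonneg (by omega)]
  push_cast
  ring

section quasiGreedy

variable {γ : ℕ → ℝ}

lemma quasiGreedy_zero_add_qRem (hγ : ∀ n, 0 < γ n) :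
    (quasiGreedy γ 0 : ℝ) + qRem γ 0 = γ 0 :=
  toNat_ceil_sub_one_add (hγ 0)

lemma quasiGreedy_succ_add_qRem (hγ : ∀ n, 0 < γ n) (n : ℕ) :
    (quasiGreedy γ (n + 1) : ℝ) + qRem γ (n + 1) = γ (n + 1) * qRem γ n :=
  toNat_ceil_sub_one_add (mul_pos (hγ _) (qRem_pos γ n))

lemma truncVal_quasiGreedy (hγ : ∀ n, 0 < γ n) (m : ℕ) :
    truncVal γ (quasiGreedy γ) (m + 1) = 1 - qRem γ m / cprod γ m := by
  induction m with
  | zero =>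
    have := quasiGreedy_zero_add_qRem hγ
    have := hγ 0
    rw [truncVal_succ, cprod_zero]
    simp only [truncVal, Finset.range_zero, Finset.sum_empty, zero_add]
    field_simp
    linarith
  | succ m ih =>
    have := quasiGreedy_succ_add_qRem hγ m
    have := hγ (m + 1)
    have := cprod_pos hγ m
    rw [truncVal_succ, ih, cprod_succ]
    field_simp
    linarith

lemma truncVal_quasiGreedy_lt_one (hγ : ∀ n, 0 < γ n) (m : ℕ) :
    truncVal γ (quasiGreedy γ) m < 1 := by
  cases m with
  | zero => simp [truncVal]
  | succ m =>
    rw [truncVal_quasiGreedy hγ]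
    linarith [div_pos (qRem_pos γ m) (cprod_pos hγ m)]

end quasiGreedy

section lex

variable {a b c : ℕ → ℕ}

-- `LexLt` is definitionally the strict order of `Lex (ℕ → ℕ)`.
lemma lexLe_iff_toLex_le : LexLe a b ↔ toLex a ≤ toLex b := by
  rw [le_iff_lt_or_eq, toLex_inj]
  rfl

lemma not_lexLt_iff : ¬ LexLt b a ↔ LexLe a b := by
  rw [lexLe_iff_toLex_le]
  exact not_lt (a := toLex b)

lemma lexLe_of_forall_le (h : ∀ n, (∀ k < n, a k = b k) → a n ≤ b n) : LexLe a b :=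
  not_lexLt_iff.1 fun ⟨ℓ, hag, hlt⟩ => (h ℓ fun k hk => (hag k hk).symm).not_gt hlt

lemma LexLe.exists_lt_or_eqOn (h : LexLe a c) (m : ℕ) :
    (∃ ℓ < m, (∀ k < ℓ, a k = c k) ∧ a ℓ < c ℓ) ∨ ∀ k < m, a k = c k := by
  rcases h with ⟨ℓ, hag, hlt⟩ | rfl
  · by_cases hℓ : ℓ < m
    · exact Or.inl ⟨ℓ, hℓ, hag, hlt⟩
    · exact Or.inr fun k hk => hag k (by omega)
  · exact Or.inr fun _ _ => rfl

lemma isOpen_setOf_lexLt (c : ℕ → ℕ) : IsOpen {a | LexLt c a} := by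
  refine isOpen_iff_eventually.2 fun a ⟨ℓ, hag, hlt⟩ => ?_
  have hnear : ∀ᶠ a' in 𝓝 a, ∀ k ∈ Finset.range (ℓ + 1), a' k = a k :=
    (Finset.eventually_all _).2 fun k _ =>
      (continuous_apply k).continuousAt.eventually_mem ((isOpen_discrete {a k}).mem_nhds rfl)
  filter_upwards [hnear] with a' ha'
  refine ⟨ℓ, fun k hk => (hag k hk).trans (ha' k (by simp; omega)).symm, ?_⟩
  rwa [ha' ℓ (by simp)]

lemma isClosed_setOf_lexLe (c : ℕ → ℕ) : IsClosed {a | LexLe a c} := by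
  simp_rw [← not_lexLt_iff]
  exact (isOpen_setOf_lexLt c).isClosed_compl

end lex

def IsAdmissible (γ : ℕ → ℝ) (b : ℕ → ℕ) : Prop :=
  ∀ n, LexLe (shiftSeq b n) (quasiGreedy (shiftBase γ n))

lemma IsAdmissible.shiftSeq {γ : ℕ → ℝ} {b : ℕ → ℕ} (h : IsAdmissible γ b) (j : ℕ) :
    IsAdmissible (shiftBase γ j) (shiftSeq b j) := fun n => by
  rw [shiftSeq_shiftSeq, shiftBase_shiftBase]
  exact h (j + n)

lemma isClosed_setOf_isAdmissible (γ : ℕ → ℝ) : IsClosed {b | IsAdmissible γ b} := by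
  simp only [IsAdmissible, Set.ofPred_forall]
  refine isClosed_iInter fun n => (isClosed_setOf_lexLe _).preimage (f := (shiftSeq · n)) ?_
  exact continuous_pi fun k => continuous_apply (n + k)

section greedy

lemma greedyRem_mem_Ico (γ : ℕ → ℝ) (x : ℝ) (n : ℕ) : greedyRem γ x n ∈ Set.Ico (0 : ℝ) 1 := by
  cases n <;> exact ⟨Int.fract_nonneg _, Int.fract_lt_one _⟩

lemma greedyRem_succ (γ : ℕ → ℝ) (x : ℝ) (k : ℕ) :
    greedyRem γ x (k + 1) = greedyRem (shiftBase γ 1) (greedyRem γ x 0) k := by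
  induction k with
  | zero => simp [greedyRem, shiftBase]
  | succ k ih =>
    rw [greedyRem.eq_2, ih, greedyRem.eq_2]
    simp only [shiftBase, add_comm]

lemma greedy_succ (γ : ℕ → ℝ) (x : ℝ) (k : ℕ) :
    greedy γ x (k + 1) = greedy (shiftBase γ 1) (greedyRem γ x 0) k := by
  cases k with
  | zero => simp [greedy, shiftBase]
  | succ k =>
    rw [greedy.eq_2, greedyRem_succ, greedy.eq_2]
    simp only [shiftBase, add_comm]

lemma shiftSeq_greedy_one (γ : ℕ → ℝ) (x : ℝ) :
    shiftSeq (greedy γ x) 1 = greedy (shiftBase γ 1) (greedyRem γ x 0) :=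
  funext fun k => by rw [shiftSeq, add_comm, greedy_succ]

variable {γ : ℕ → ℝ}

lemma greedy_of_eq_div (hγ0 : γ 0 ≠ 0) (d : ℕ) {y : ℝ} (hy : y ∈ Set.Ico (0 : ℝ) 1) :
    greedy γ ((d + y) / γ 0) 0 = d ∧ greedyRem γ ((d + y) / γ 0) 0 = y := by
  have hfloor : ⌊(d : ℝ) + y⌋ = d := by
    rw [Int.floor_natCast_add, Int.floor_eq_zero_iff.2 hy, add_zero]
  simp only [greedy, greedyRem, mul_div_cancel₀ _ hγ0, hfloor]
  simp

lemma shiftSeq_mem_Dset {b : ℕ → ℕ} (hb : b ∈ Dset γ) (n : ℕ) :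
    shiftSeq b n ∈ Dset (shiftBase γ n) := by
  induction n with
  | zero => rwa [shiftSeq_zero, shiftBase_zero]
  | succ n ih =>
    obtain ⟨y, -, hy⟩ := ih
    refine ⟨_, greedyRem_mem_Ico (shiftBase γ n) y 0, ?_⟩
    rw [← shiftSeq_shiftSeq, hy, ← shiftBase_shiftBase, shiftSeq_greedy_one]

lemma greedy_step_le_quasiGreedy_step {u v : ℝ} (hu : 0 ≤ u) (huv : u < v) :
    ⌊u⌋.toNat ≤ (⌈v⌉ - 1).toNat ∧
      (⌊u⌋.toNat = (⌈v⌉ - 1).toNat → u - ⌊u⌋ < v - (⌈v⌉ - 1)) := by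
  have hlt : ⌊u⌋ < ⌈v⌉ := Int.floor_lt_ceil_of_lt huv
  have hnonneg : 0 ≤ ⌊u⌋ := Int.floor_nonneg.2 hu
  refine ⟨by omega, fun heq => ?_⟩
  have : (⌊u⌋ : ℝ) = ⌈v⌉ - 1 := by exact_mod_cast (show ⌊u⌋ = ⌈v⌉ - 1 by omega)
  linarith

lemma greedy_le_quasiGreedy_of_eqOn (hγ : ∀ n, 0 < γ n) {y : ℝ} (hy : y ∈ Set.Ico (0 : ℝ) 1) :
    ∀ n, (∀ k < n, greedy γ y k = quasiGreedy γ k) →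
      greedy γ y n ≤ quasiGreedy γ n ∧
        (greedy γ y n = quasiGreedy γ n → greedyRem γ y n < qRem γ n) := by
  intro n
  induction n with
  | zero =>
    intro _
    exact greedy_step_le_quasiGreedy_step (mul_nonneg (hγ 0).le hy.1)
      (mul_lt_of_lt_one_right (hγ 0) hy.2)
  | succ n ih =>
    intro hag
    have hrem := (ih fun k hk => hag k (by omega)).2 (hag n (by omega))
    exact greedy_step_le_quasiGreedy_step (mul_nonneg (hγ _).le (greedyRem_mem_Ico γ y n).1)
      (mul_lt_mul_of_pos_left hrem (hγ _))

lemma greedy_lexLe_quasiGreedy (hγ : ∀ n, 0 < γ n) {y : ℝ} (hy : y ∈ Set.Ico (0 : ℝ) 1) :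
    LexLe (greedy γ y) (quasiGreedy γ) :=
  lexLe_of_forall_le fun n hag => (greedy_le_quasiGreedy_of_eqOn hγ hy n hag).1

lemma isAdmissible_of_mem_Dset (hγ : ∀ n, 0 < γ n) {b : ℕ → ℕ} (hb : b ∈ Dset γ) :
    IsAdmissible γ b := fun n => by
  obtain ⟨y, hy, h⟩ := shiftSeq_mem_Dset hb n
  rw [h]
  exact greedy_lexLe_quasiGreedy (fun k => hγ (n + k)) hy

end greedy

section admissible

variable {γ : ℕ → ℝ}

lemma truncVal_add_lt_of_lexLt_at (hγ : ∀ n, 0 < γ n) {b c : ℕ → ℕ} {ℓ : ℕ}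
    (hag : ∀ k < ℓ, b k = c k) (hlt : b ℓ < c ℓ) {y : ℝ} (hy : y < 1) :
    truncVal γ b (ℓ + 1) + y / cprod γ ℓ < truncVal γ c (ℓ + 1) := by
  have hdigit : (b ℓ : ℝ) + y < c ℓ := by
    have : (b ℓ : ℝ) + 1 ≤ c ℓ := by exact_mod_cast hlt
    linarith
  rw [truncVal_succ, truncVal_succ, truncVal_congr hag, add_assoc, ← add_div]
  gcongr
  exact cprod_pos hγ ℓ

lemma truncVal_lt_one_of_isAdmissible (hγ : ∀ n, 0 < γ n) {b : ℕ → ℕ} (hb : IsAdmissible γ b)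
    (m : ℕ) : truncVal γ b m < 1 := by
  induction m using Nat.strong_induction_on generalizing γ b with
  | _ m ih =>
  have hq : LexLe b (quasiGreedy γ) := by simpa [shiftSeq_zero, shiftBase_zero] using hb 0
  rcases hq.exists_lt_or_eqOn m with ⟨ℓ, hℓ, hag, hlt⟩ | hagree
  · obtain ⟨t, rfl⟩ : ∃ t, m = ℓ + 1 + t := ⟨m - (ℓ + 1), by omega⟩
    have htail := ih t (by omega) (fun n => hγ _) (hb.shiftSeq (ℓ + 1))
    rw [truncVal_add]
    exact (truncVal_add_lt_of_lexLt_at hγ hag hlt htail).trans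
      (truncVal_quasiGreedy_lt_one hγ _)
  · rw [truncVal_congr hagree]
    exact truncVal_quasiGreedy_lt_one hγ m

lemma greedy_truncVal (hγ : ∀ n, 0 < γ n) {b : ℕ → ℕ} (hb : IsAdmissible γ b) {N k : ℕ}
    (hk : k < N) : greedy γ (truncVal γ b N) k = b k := by
  induction N generalizing γ b k with
  | zero => omega
  | succ N ih =>
    have hγ' : ∀ n, 0 < shiftBase γ 1 n := fun n => hγ _
    have htail : truncVal (shiftBase γ 1) (shiftSeq b 1) N ∈ Set.Ico (0 : ℝ) 1 :=
      ⟨truncVal_nonneg hγ' _ N, truncVal_lt_one_of_isAdmissible hγ' (hb.shiftSeq 1) N⟩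
    obtain ⟨hdigit, hrem⟩ := greedy_of_eq_div (hγ 0).ne' (b 0) htail
    rw [truncVal_succ']
    cases k with
    | zero => exact hdigit
    | succ k =>
      rw [greedy_succ, hrem, ih hγ' (hb.shiftSeq 1) (by omega), shiftSeq, add_comm]

lemma mem_closure_Dset_of_isAdmissible (hγ : ∀ n, 0 < γ n) {b : ℕ → ℕ} (hb : IsAdmissible γ b) :
    b ∈ closure (Dset γ) := by
  have hmem : ∀ N, greedy γ (truncVal γ b N) ∈ Dset γ := fun N =>
    ⟨_, ⟨truncVal_nonneg hγ b N, truncVal_lt_one_of_isAdmissible hγ hb N⟩, rfl⟩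
  refine mem_closure_of_tendsto (b := atTop) ?_ (Eventually.of_forall hmem)
  refine tendsto_pi_nhds.2 fun k => tendsto_nhds_of_eventually_eq ?_
  filter_upwards [eventually_gt_atTop k] with N hN using greedy_truncVal hγ hb hN

end admissible

theorem stmt_15 (β : ℕ → ℝ) (hβ : IsCantorBase β) (a : ℕ → ℕ) :
    a ∈ closure (Dset β) ↔
      ∀ n : ℕ, LexLe (shiftSeq a n) (quasiGreedy (shiftBase β n)) := by
  have hβ_pos : ∀ n, 0 < β n := fun n => zero_lt_one.trans (hβ.1 n)
  refine ⟨fun ha => ?_, mem_closure_Dset_of_isAdmissible hβ_pos⟩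
  exact closure_minimal (fun b => isAdmissible_of_mem_Dset hβ_pos)
    (isClosed_setOf_isAdmissible β) ha
end

section
/- Let β be a Cantor real base and let S_β be the closure of D_β = {d_β(x) : x ∈ [0,1)} for the prefix distance. For a, b ∈ S_β: (1) if a <_lex b then val_β(a) ≤ val_β(b); (2) if val_β(a) < val_β(b) then a <_lex b. -/
open Filter

/-!
A greedy expansion `a` of a point of `[0,1)` satisfies the tail bound
`∑_{ℓ < n < N} a n / (β 0 ⋯ β n) ≤ 1 / (β 0 ⋯ β ℓ)`, because the greedy remainder after step `ℓ`
lies in `[0,1)`. Each of these bounds involves finitely many digits, so it is a closed condition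
and persists on the closure `S_β`. If `a <_lex b` first differ at position `ℓ`, the tail of `a`
after `ℓ` weighs at most one unit of that position, which the larger digit `b ℓ` makes up for.
Part (2) is the contrapositive of part (1), the lexicographic order being total.
-/

open Finset

lemma cprod_pos_s16 {β : ℕ → ℝ} (hβ : ∀ n, 1 < β n) (n : ℕ) : 0 < cprod β n :=
  prod_pos fun i _ => one_pos.trans (hβ i)

lemma natCast_toNat_floor_add_fract {R : Type*} [Ring R] [LinearOrder R] [IsStrictOrderedRing R]
    [FloorRing R] {y : R} (hy : 0 ≤ y) : ((⌊y⌋.toNat : ℕ) : R) + Int.fract y = y := by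
  rw [← Int.cast_natCast, Int.toNat_of_nonneg (Int.floor_nonneg.2 hy), Int.floor_add_fract]

section Greedy

variable {β : ℕ → ℝ} {x : ℝ}

lemma greedyRem_nonneg (n : ℕ) : 0 ≤ greedyRem β x n := by
  cases n <;> exact Int.fract_nonneg _

lemma greedyRem_lt_one (n : ℕ) : greedyRem β x n < 1 := by
  cases n <;> exact Int.fract_lt_one _

lemma sum_greedy_add_greedyRem (hβ : ∀ n, 1 < β n) (hx : 0 ≤ x) (n : ℕ) :
    ∑ k ∈ range (n + 1), (greedy β x k : ℝ) / cprod β k + greedyRem β x n / cprod β n = x := by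
  induction n with
  | zero =>
    have hβ0 : 0 < β 0 := one_pos.trans (hβ 0)
    have hdigit : (greedy β x 0 : ℝ) + greedyRem β x 0 = β 0 * x :=
      natCast_toNat_floor_add_fract (mul_nonneg hβ0.le hx)
    rw [sum_range_one, ← add_div, hdigit, cprod, prod_range_one, mul_div_cancel_left₀ _ hβ0.ne']
  | succ n ih =>
    have hβn : 0 < β (n + 1) := one_pos.trans (hβ _)
    have hdigit : (greedy β x (n + 1) : ℝ) + greedyRem β x (n + 1) = β (n + 1) * greedyRem β x n :=
      natCast_toNat_floor_add_fract (mul_nonneg hβn.le (greedyRem_nonneg n))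
    have hcprod : cprod β (n + 1) = β (n + 1) * cprod β n := by
      rw [cprod, prod_range_succ, mul_comm]; rfl
    rw [sum_range_succ, add_assoc, ← add_div, hdigit, hcprod, mul_div_mul_left _ _ hβn.ne', ih]

end Greedy

def TailBounded (β : ℕ → ℝ) (a : ℕ → ℕ) : Prop :=
  ∀ ℓ N, ∑ n ∈ Ico (ℓ + 1) N, (a n : ℝ) / cprod β n ≤ 1 / cprod β ℓ

lemma tailBounded_greedy {β : ℕ → ℝ} (hβ : ∀ n, 1 < β n) {x : ℝ} (hx : 0 ≤ x) :
    TailBounded β (greedy β x) := by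
  intro ℓ N
  rcases lt_or_ge N (ℓ + 1) with hN | hN
  · rw [Ico_eq_empty_of_le hN.le, sum_empty]
    exact (one_div_pos.2 (cprod_pos_s16 hβ ℓ)).le
  obtain ⟨M, rfl⟩ : ∃ M, N = M + 1 := ⟨N - 1, by omega⟩
  have hM := sum_greedy_add_greedyRem hβ hx M
  have hℓ := sum_greedy_add_greedyRem hβ hx ℓ
  have hremM : 0 ≤ greedyRem β x M / cprod β M :=
    div_nonneg (greedyRem_nonneg M) (cprod_pos_s16 hβ M).le
  have hremℓ : greedyRem β x ℓ / cprod β ℓ ≤ 1 / cprod β ℓ :=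
    div_le_div_of_nonneg_right (greedyRem_lt_one ℓ).le (cprod_pos_s16 hβ ℓ).le
  rw [sum_Ico_eq_sub _ hN]
  linarith

lemma isClosed_setOf_tailBounded (β : ℕ → ℝ) : IsClosed {a : ℕ → ℕ | TailBounded β a} := by
  simp only [TailBounded, Set.ofPred_forall]
  refine isClosed_iInter fun ℓ => isClosed_iInter fun N => isClosed_le ?_ continuous_const
  fun_prop

lemma closure_dset_subset_tailBounded {β : ℕ → ℝ} (hβ : ∀ n, 1 < β n) :
    closure (Dset β) ⊆ {a | TailBounded β a} :=
  closure_minimal (fun _ ⟨_, hx, ha⟩ => ha ▸ tailBounded_greedy hβ hx.1)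
    (isClosed_setOf_tailBounded β)

namespace TailBounded

variable {β : ℕ → ℝ} {a : ℕ → ℕ}

lemma sum_range_shift_le (ha : TailBounded β a) (ℓ N : ℕ) :
    ∑ k ∈ range N, (a (k + (ℓ + 1)) : ℝ) / cprod β (k + (ℓ + 1)) ≤ 1 / cprod β ℓ := by
  simpa [sum_Ico_eq_sum_range, add_comm] using ha ℓ (ℓ + 1 + N)

lemma summable (hβ : ∀ n, 1 < β n) (ha : TailBounded β a) :
    Summable fun n => (a n : ℝ) / cprod β n :=
  (summable_nat_add_iff 1).1 <| summable_of_sum_range_le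
    (fun _ => div_nonneg (Nat.cast_nonneg _) (cprod_pos_s16 hβ _).le) (ha.sum_range_shift_le 0)

lemma tsum_shift_le (hβ : ∀ n, 1 < β n) (ha : TailBounded β a) (ℓ : ℕ) :
    ∑' k, (a (k + (ℓ + 1)) : ℝ) / cprod β (k + (ℓ + 1)) ≤ 1 / cprod β ℓ :=
  Real.tsum_le_of_sum_range_le
    (fun _ => div_nonneg (Nat.cast_nonneg _) (cprod_pos_s16 hβ _).le) (ha.sum_range_shift_le ℓ)

lemma valN_le_of_lexLt (hβ : ∀ n, 1 < β n) (ha : TailBounded β a) {b : ℕ → ℕ}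
    (hb : Summable fun n => (b n : ℝ) / cprod β n) (hab : LexLt a b) :
    valN β a ≤ valN β b := by
  obtain ⟨ℓ, hprefix, hlt⟩ := hab
  have hcprod := cprod_pos_s16 hβ ℓ
  have hdigit : (a ℓ : ℝ) / cprod β ℓ + 1 / cprod β ℓ ≤ (b ℓ : ℝ) / cprod β ℓ := by
    rw [← add_div]
    gcongr
    exact_mod_cast hlt
  have htail_a := ha.tsum_shift_le hβ ℓ
  have htail_b : 0 ≤ ∑' k, (b (k + (ℓ + 1)) : ℝ) / cprod β (k + (ℓ + 1)) :=
    tsum_nonneg fun _ => div_nonneg (Nat.cast_nonneg _) (cprod_pos_s16 hβ _).le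
  have hsame : ∑ k ∈ range ℓ, (a k : ℝ) / cprod β k = ∑ k ∈ range ℓ, (b k : ℝ) / cprod β k :=
    sum_congr rfl fun k hk => by rw [hprefix k (mem_range.1 hk)]
  rw [valN, valN, valB, valB, ← (ha.summable hβ).sum_add_tsum_nat_add (ℓ + 1),
    ← hb.sum_add_tsum_nat_add (ℓ + 1), sum_range_succ, sum_range_succ, hsame]
  linarith

end TailBounded

lemma lexLt_iff_toLex_lt {a b : ℕ → ℕ} : LexLt a b ↔ toLex a < toLex b := Iff.rfl

theorem stmt_16 (β : ℕ → ℝ) (hβ : IsCantorBase β) (a b : ℕ → ℕ)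
    (haS : a ∈ closure (Dset β)) (hbS : b ∈ closure (Dset β)) :
    (LexLt a b → valN β a ≤ valN β b) ∧ (valN β a < valN β b → LexLt a b) := by
  have hS := closure_dset_subset_tailBounded hβ.1
  have hmono : ∀ {c d}, c ∈ closure (Dset β) → d ∈ closure (Dset β) →
      LexLt c d → valN β c ≤ valN β d := fun hc hd =>
    (hS hc).valN_le_of_lexLt hβ.1 ((hS hd).summable hβ.1)
  refine ⟨hmono haS hbS, fun hval => ?_⟩
  rw [lexLt_iff_toLex_lt]
  refine lt_of_not_ge fun hba => ?_
  rcases hba.lt_or_eq with hlt | heq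
  · exact hval.not_ge (hmono hbS haS hlt)
  · exact hval.ne (congrArg (valN β) (toLex.injective heq)).symm
end
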